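/- Fix a constant C > 0, let a(r) = r/2 − C + 1/r, and let r₁ ≥ 4(C+1). Fix c₁ > 0, set β = √2·c₁, r₂ = r₁ + π/(4β), c₂ = (1/√2)(1 − π/4) − r₁ c₁, and define φ : [r₁,∞) → ℝ by φ(r) = sin(β(r−r₁)) for r₁ ≤ r ≤ r₂ and φ(r) = c₁ r + c₂ for r ≥ r₂. Then a(r) ≥ r/4 + 1 for all r ≥ r₁, and there exists μ > 0 such that φ″(r) − a(r) φ′(r) ≤ −μ φ(r) for every r ∈ (r₁, r₂) ∪ (r₂, ∞). -/

import Mathlib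

open Real Set Filter Topology

/-! On the sine arc the argument `β (r - r₁)` stays in `[0, π/4]`, so `sin` and `cos` are
nonnegative and the drift term `-a φ'` only helps: `φ'' - a φ' ≤ -β² φ`. On the affine part
`φ'' = 0` and `-a φ' = -a c₁ ≤ -(r/4 + 1) c₁`, which dominates `-μ (c₁ r + c₂)` as soon as
`μ ≤ 1/4` and `μ c₂ ≤ c₁`. All three smallness conditions hold for `μ` close to `0⁺`. -/

lemma quarter_add_one_le_drift {C r : ℝ} (hr : 4 * (C + 1) ≤ r) (hr₀ : 0 ≤ r) :
    r / 4 + 1 ≤ r / 2 - C + 1 / r := by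
  have : 0 ≤ 1 / r := one_div_nonneg.mpr hr₀
  linarith

lemma sin_arc_supersolution {β μ A x : ℝ} (hβ : 0 ≤ β) (hA : 0 ≤ A) (hμ : μ ≤ β ^ 2)
    (hx₀ : 0 ≤ x) (hx₁ : x ≤ π / 2) :
    -(β ^ 2) * sin x - A * (β * cos x) ≤ -μ * sin x := by
  have hsin : 0 ≤ sin x := sin_nonneg_of_nonneg_of_le_pi hx₀ (by linarith [pi_pos])
  have hcos : 0 ≤ cos x := cos_nonneg_of_mem_Icc ⟨by linarith [pi_pos], hx₁⟩
  nlinarith [mul_nonneg hsin (sub_nonneg.mpr hμ), mul_nonneg hA (mul_nonneg hβ hcos)]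

lemma affine_supersolution {c₁ c₂ μ A r : ℝ} (hc₁ : 0 ≤ c₁) (hr : 0 ≤ r)
    (hA : r / 4 + 1 ≤ A) (hμ : μ ≤ 1 / 4) (hμc₂ : μ * c₂ ≤ c₁) :
    0 - A * c₁ ≤ -μ * (c₁ * r + c₂) := by
  nlinarith [mul_nonneg (sub_nonneg.mpr hμ) (mul_nonneg hc₁ hr),
    mul_nonneg hc₁ (sub_nonneg.mpr hA)]

lemma exists_pos_le_and_mul_le {b c : ℝ} (hb : 0 < b) (hc : 0 < c) (d : ℝ) :
    ∃ μ : ℝ, 0 < μ ∧ μ ≤ b ∧ μ * d ≤ c := by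
  have hmul : Tendsto (fun μ : ℝ => μ * d) (𝓝 0) (𝓝 0) := by
    simpa using ((continuous_mul_const d).tendsto (0 : ℝ))
  have hsmall : ∀ᶠ μ in 𝓝[>] (0 : ℝ), 0 < μ ∧ μ ≤ b ∧ μ * d ≤ c :=
    (eventually_mem_nhdsWithin (a := 0) (s := Ioi 0)).and <| nhdsWithin_le_nhds <|
      (eventually_le_nhds hb).and (hmul.eventually (eventually_le_nhds hc))
  exact hsmall.exists

theorem comparison_function_supersolution_general
    (C r₁ c₁ β r₂ c₂ : ℝ) (a φ φ' φ'' : ℝ → ℝ)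
    (hC : 0 < C) (hr₁ : 4 * (C + 1) ≤ r₁) (hc₁ : 0 < c₁)
    (hβ : β = Real.sqrt 2 * c₁)
    (hr₂ : r₂ = r₁ + π / (4 * β))
    (ha : ∀ r, a r = r / 2 - C + 1 / r)
    (hφ : ∀ r, φ r = if r ≤ r₂ then Real.sin (β * (r - r₁)) else c₁ * r + c₂)
    (hφ' : ∀ r, φ' r = if r ≤ r₂ then β * Real.cos (β * (r - r₁)) else c₁)
    (hφ'' : ∀ r, φ'' r = if r ≤ r₂ then -(β ^ 2) * Real.sin (β * (r - r₁)) else 0) :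
    (∀ r, r₁ ≤ r → r / 4 + 1 ≤ a r) ∧
    ∃ μ : ℝ, 0 < μ ∧ ∀ r : ℝ, ((r₁ < r ∧ r < r₂) ∨ r₂ < r) →
      φ'' r - a r * φ' r ≤ -μ * φ r := by
  have hβ₀ : 0 < β := hβ ▸ mul_pos (sqrt_pos.mpr two_pos) hc₁
  have hr₁₀ : 0 < r₁ := by linarith
  have hr₁₂ : r₁ ≤ r₂ := hr₂ ▸ le_add_of_nonneg_right (by positivity)
  have hdrift : ∀ r, r₁ ≤ r → r / 4 + 1 ≤ a r := fun r hr =>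
    ha r ▸ quarter_add_one_le_drift (hr₁.trans hr) (hr₁₀.le.trans hr)
  obtain ⟨μ, hμ₀, hμ, hμc₂⟩ :=
    exists_pos_le_and_mul_le (lt_min (pow_pos hβ₀ 2) (by norm_num : (0 : ℝ) < 1 / 4)) hc₁ c₂
  refine ⟨hdrift, μ, hμ₀, ?_⟩
  rintro r (⟨hr₁r, hrr₂⟩ | hr₂r)
  · have harc : β * (r - r₁) ≤ π / 4 := by
      calc β * (r - r₁) ≤ β * (r₂ - r₁) := by gcongr
        _ = π / 4 := by rw [hr₂]; field_simp; ring
    simp only [hφ, hφ', hφ'', if_pos hrr₂.le]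
    exact sin_arc_supersolution hβ₀.le (by linarith [hdrift r hr₁r.le])
      (hμ.trans (min_le_left _ _)) (by nlinarith) (by linarith [pi_pos])
  · simp only [hφ, hφ', hφ'', if_neg hr₂r.not_ge]
    exact affine_supersolution hc₁.le (by linarith) (hdrift r (by linarith))
      (hμ.trans (min_le_right _ _)) hμc₂

/-- The differential inequality (1.243-2): with drift coefficient
`a(r) = r/2 − C + 1/r` and `r₁ ≥ 4(C+1)`, one has `a(r) ≥ r/4 + 1` for `r ≥ r₁`, and
the comparison function `φ` is a supersolution: there exists `μ > 0` with
`φ″ − a φ′ ≤ −μ φ` on `(r₁,r₂) ∪ (r₂,∞)`. -/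
theorem comparison_function_supersolution
    (C r₁ c₁ β r₂ c₂ : ℝ) (a φ φ' φ'' : ℝ → ℝ)
    (hC : 0 < C) (hr₁ : 4 * (C + 1) ≤ r₁) (hc₁ : 0 < c₁)
    (hβ : β = Real.sqrt 2 * c₁)
    (hr₂ : r₂ = r₁ + π / (4 * β))
    (hc₂ : c₂ = (1 / Real.sqrt 2) * (1 - π / 4) - r₁ * c₁)
    (ha : ∀ r, a r = r / 2 - C + 1 / r)
    (hφ : ∀ r, φ r = if r ≤ r₂ then Real.sin (β * (r - r₁)) else c₁ * r + c₂)
    (hφ' : ∀ r, φ' r = if r ≤ r₂ then β * Real.cos (β * (r - r₁)) else c₁)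
    (hφ'' : ∀ r, φ'' r = if r ≤ r₂ then -(β ^ 2) * Real.sin (β * (r - r₁)) else 0) :
    (∀ r, r₁ ≤ r → r / 4 + 1 ≤ a r) ∧
    ∃ μ : ℝ, 0 < μ ∧ ∀ r : ℝ, ((r₁ < r ∧ r < r₂) ∨ r₂ < r) →
      φ'' r - a r * φ' r ≤ -μ * φ r :=
  comparison_function_supersolution_general C r₁ c₁ β r₂ c₂ a φ φ' φ'' hC hr₁ hc₁ hβ hr₂ ha hφ hφ'
    hφ''
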